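/- Let 0 ≤ l ≤ min(m, n) and let Φ_l = ∑_{i=0}^{l} d_{i,l} v_{m-l+i} ⊗ w_{n-i} ∈ V_m ⊗ V_n, where d_{i,l} = (-1)^i q^{i(-m+2l-i-1)} ∏_{j=0}^{i} [m-l+j]_q / [n-j+1]_q. Then f Φ_l = 0, where f acts on V_m ⊗ V_n via the comultiplication f(v ⊗ w) = f v ⊗ w + K^{-1} v ⊗ f w. -/
import Mathlib


open scoped BigOperators

/-- The `q`-integer `[r]_q = (q^r - q^{-r})/(q - q⁻¹)`. -/
noncomputable def qint (q : ℂ) (r : ℤ) : ℂ := (q ^ r - q ^ (-r)) / (q - q⁻¹)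

/-- The `q`-factorial `[r]_q! = ∏_{s=1}^r [s]_q`. -/
noncomputable def qfact (q : ℂ) (r : ℕ) : ℂ := ∏ s ∈ Finset.range r, qint q ((s : ℤ) + 1)

/-- The `q`-binomial coefficient `[r choose s]_q`. -/
noncomputable def qbinom (q : ℂ) (r s : ℕ) : ℂ := qfact q r / (qfact q s * qfact q (r - s))

/-- `q` is not a root of unity. -/
def NotRootOfUnity (q : ℂ) : Prop := ∀ k : ℕ, 0 < k → q ^ k ≠ 1

/-- The underlying space of `V_m ⊗ V_n` in terms of the coefficients with respect to the
basis `v_i ⊗ w_j`, `0 ≤ i ≤ m`, `0 ≤ j ≤ n`. -/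
abbrev W (m n : ℕ) := Fin (m + 1) → Fin (n + 1) → ℂ

/-- Extension of a coefficient array to all of `ℕ × ℕ`, zero out of range. -/
noncomputable def uext {m n : ℕ} (u : W m n) (a b : ℕ) : ℂ :=
  if h : a ≤ m ∧ b ≤ n then u ⟨a, by omega⟩ ⟨b, by omega⟩ else 0

/-- The basis vector `v_i ⊗ w_j` of `V_m ⊗ V_n`. -/
def basisW (m n i j : ℕ) : W m n := fun a b => if (a : ℕ) = i ∧ (b : ℕ) = j then 1 else 0

/-- Action of `e` on `V_m ⊗ V_n`: `e (v ⊗ w) = e v ⊗ K w + v ⊗ e w`, where on `V_m`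
`e v_i = [m+1-i]_q v_{i-1}` and `K v_i = q^{m-2i} v_i`. -/
noncomputable def eT (q : ℂ) (m n : ℕ) (u : W m n) : W m n := fun a b =>
  qint q ((m : ℤ) - ((a : ℕ) : ℤ)) * q ^ ((n : ℤ) - 2 * ((b : ℕ) : ℤ)) *
      uext u ((a : ℕ) + 1) (b : ℕ)
    + qint q ((n : ℤ) - ((b : ℕ) : ℤ)) * uext u (a : ℕ) ((b : ℕ) + 1)

/-- Action of `f` on `V_m ⊗ V_n`: `f (v ⊗ w) = f v ⊗ w + K⁻¹ v ⊗ f w`, where on `V_m`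
`f v_i = [i+1]_q v_{i+1}` and `K⁻¹ v_i = q^{-(m-2i)} v_i`. -/
noncomputable def fT (q : ℂ) (m n : ℕ) (u : W m n) : W m n := fun a b =>
  qint q ((a : ℕ) : ℤ) * uext u ((a : ℕ) - 1) (b : ℕ)
    + q ^ (-((m : ℤ) - 2 * ((a : ℕ) : ℤ))) * qint q ((b : ℕ) : ℤ) *
        uext u (a : ℕ) ((b : ℕ) - 1)

/-- Action of `K` on `V_m ⊗ V_n`: `K (v ⊗ w) = K v ⊗ K w`. -/
noncomputable def KT (q : ℂ) (m n : ℕ) (u : W m n) : W m n := fun a b =>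
  q ^ ((m : ℤ) - 2 * ((a : ℕ) : ℤ)) * q ^ ((n : ℤ) - 2 * ((b : ℕ) : ℤ)) * u a b

/-- Action of `e₀` on the evaluation module `V_m(x) ⊗ V_n(y)`:
`e₀ (v ⊗ w) = q⁻¹ x (f v) ⊗ (K⁻¹ w) + q⁻¹ y v ⊗ (f w)`. -/
noncomputable def e0T (q x y : ℂ) (m n : ℕ) (u : W m n) : W m n := fun a b =>
  q⁻¹ * x * qint q ((a : ℕ) : ℤ) * q ^ (-((n : ℤ) - 2 * ((b : ℕ) : ℤ))) *
      uext u ((a : ℕ) - 1) (b : ℕ)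
    + q⁻¹ * y * qint q ((b : ℕ) : ℤ) * uext u (a : ℕ) ((b : ℕ) - 1)

/-- Action of `f₀` on the evaluation module `V_m(x) ⊗ V_n(y)`:
`f₀ (v ⊗ w) = q x⁻¹ (e v) ⊗ w + q y⁻¹ (K v) ⊗ (e w)`. -/
noncomputable def f0T (q x y : ℂ) (m n : ℕ) (u : W m n) : W m n := fun a b =>
  q * x⁻¹ * qint q ((m : ℤ) - ((a : ℕ) : ℤ)) * uext u ((a : ℕ) + 1) (b : ℕ)
    + q * y⁻¹ * q ^ ((m : ℤ) - 2 * ((a : ℕ) : ℤ)) * qint q ((n : ℤ) - ((b : ℕ) : ℤ)) *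
        uext u (a : ℕ) ((b : ℕ) + 1)

/-- The coefficient `c_{i,l-i} = (-1)^i q^{i(2l-n-i-1)} ∏_{j=0}^i [n-l+j]_q/[m-j+1]_q`. -/
noncomputable def cOmega (q : ℂ) (m n l i : ℕ) : ℂ :=
  (-1 : ℂ) ^ i * q ^ ((i : ℤ) * (2 * (l : ℤ) - (n : ℤ) - (i : ℤ) - 1)) *
    ∏ j ∈ Finset.range (i + 1),
      qint q ((n : ℤ) - (l : ℤ) + (j : ℤ)) / qint q ((m : ℤ) - (j : ℤ) + 1)

/-- The highest weight vector `Ω_l = ∑_{i=0}^l c_{i,l-i} v_i ⊗ w_{l-i}`. -/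
noncomputable def Omega (q : ℂ) (m n l : ℕ) : W m n :=
  ∑ i ∈ Finset.range (l + 1), cOmega q m n l i • basisW m n i (l - i)

/-- The coefficient `d_{i,l} = (-1)^i q^{i(-m+2l-i-1)} ∏_{j=0}^i [m-l+j]_q/[n-j+1]_q`. -/
noncomputable def dPhi (q : ℂ) (m n l i : ℕ) : ℂ :=
  (-1 : ℂ) ^ i * q ^ ((i : ℤ) * (-(m : ℤ) + 2 * (l : ℤ) - (i : ℤ) - 1)) *
    ∏ j ∈ Finset.range (i + 1),
      qint q ((m : ℤ) - (l : ℤ) + (j : ℤ)) / qint q ((n : ℤ) - (j : ℤ) + 1)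

/-- The lowest weight vector `Φ_l = ∑_{i=0}^l d_{i,l} v_{m-l+i} ⊗ w_{n-i}`. -/
noncomputable def Phi (q : ℂ) (m n l : ℕ) : W m n :=
  ∑ i ∈ Finset.range (l + 1), dPhi q m n l i • basisW m n (m - l + i) (n - i)

lemma qint_zero (q : ℂ) : qint q 0 = 0 := by simp [qint]

lemma zpow_eq_one_imp (q : ℂ) (hq : q ≠ 0) (hq' : NotRootOfUnity q) (k : ℤ)
    (h : q ^ k = 1) : k = 0 := by
  rcases lt_trichotomy k 0 with hk | hk | hk
  · exfalso
    apply hq' (-k).toNat (by omega)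
    have : q ^ (-k) = 1 := by rw [zpow_neg, h]; simp
    rw [← this, ← zpow_natCast]
    congr 1
    omega
  · exact hk
  · exfalso
    apply hq' k.toNat (by omega)
    rw [← h, ← zpow_natCast]
    congr 1
    omega

lemma qint_ne_zero (q : ℂ) (hq : q ≠ 0) (hq' : NotRootOfUnity q) {r : ℤ} (hr : r ≠ 0) :
    qint q r ≠ 0 := by
  have hden : q - q⁻¹ ≠ 0 := by
    intro h
    have h' : q = q⁻¹ := sub_eq_zero.mp h
    have h2 : q ^ (2 : ℕ) = 1 := by
      rw [pow_two]
      nth_rewrite 2 [h']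
      exact mul_inv_cancel₀ hq
    exact hq' 2 (by norm_num) h2
  have hnum : q ^ r - q ^ (-r) ≠ 0 := by
    intro h
    have h1 : q ^ r = q ^ (-r) := by linear_combination h
    have h2 : q ^ (2 * r) = 1 := by
      calc q ^ (2 * r) = q ^ r * q ^ r := by
              rw [← zpow_add₀ hq]; congr 1; ring
        _ = q ^ r * q ^ (-r) := by rw [← h1]
        _ = 1 := by rw [← zpow_add₀ hq]; simp
    have := zpow_eq_one_imp q hq hq' (2 * r) h2
    omega
  exact div_ne_zero hnum hden

lemma dPhi_succ (q : ℂ) (hq : q ≠ 0) (m n l i : ℕ) :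
    dPhi q m n l (i + 1)
      = -(q ^ (-(m : ℤ) + 2 * l - 2 * i - 2) *
          (qint q ((m : ℤ) - l + i + 1) / qint q ((n : ℤ) - i)))
        * dPhi q m n l i := by
  simp only [dPhi, Finset.prod_range_succ]
  push_cast
  rw [show (m : ℤ) - l + ((i : ℤ) + 1) = (m : ℤ) - l + i + 1 by ring,
      show (n : ℤ) - ((i : ℤ) + 1) + 1 = (n : ℤ) - i by ring,
      show ((i : ℤ) + 1) * (-(m : ℤ) + 2 * l - ((i : ℤ) + 1) - 1)
        = (-(m : ℤ) + 2 * l - 2 * i - 2) + (i : ℤ) * (-(m : ℤ) + 2 * l - i - 1) by ring,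
      zpow_add₀ hq, pow_succ]
  ring

lemma key_rec (q : ℂ) (hq : q ≠ 0) (hq' : NotRootOfUnity q) (m n l i : ℕ)
    (hln : l ≤ n) (hi : i + 1 ≤ l) :
    qint q ((m : ℤ) - l + i + 1) * dPhi q m n l i
      + q ^ ((m : ℤ) - 2 * l + 2 * i + 2) * qint q ((n : ℤ) - i) * dPhi q m n l (i + 1)
        = 0 := by
  have hY : qint q ((n : ℤ) - i) ≠ 0 := qint_ne_zero q hq hq' (by omega)
  rw [dPhi_succ q hq]
  have hpow : q ^ ((m : ℤ) - 2 * l + 2 * i + 2) * q ^ (-(m : ℤ) + 2 * l - 2 * i - 2)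
      = 1 := by
    rw [← zpow_add₀ hq, show (m : ℤ) - 2 * l + 2 * i + 2 + (-(m : ℤ) + 2 * l - 2 * i - 2)
      = 0 by ring, zpow_zero]
  have hstep : q ^ ((m : ℤ) - 2 * l + 2 * i + 2) * qint q ((n : ℤ) - i) *
      (-(q ^ (-(m : ℤ) + 2 * l - 2 * i - 2) *
          (qint q ((m : ℤ) - l + i + 1) / qint q ((n : ℤ) - i))) * dPhi q m n l i)
      = -((q ^ ((m : ℤ) - 2 * l + 2 * i + 2) * q ^ (-(m : ℤ) + 2 * l - 2 * i - 2)) *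
          ((qint q ((m : ℤ) - l + i + 1) / qint q ((n : ℤ) - i)) * qint q ((n : ℤ) - i)
            * dPhi q m n l i)) := by ring
  rw [hstep, hpow, div_mul_cancel₀ _ hY]
  ring

lemma Phi_apply (q : ℂ) (m n l : ℕ) (hl : l ≤ min m n) (x y : ℕ) :
    uext (Phi q m n l) x y =
      if x + y + l = m + n ∧ m - l ≤ x ∧ x ≤ m ∧ y ≤ n then
        dPhi q m n l (x - (m - l)) else 0 := by
  have hlm : l ≤ m := le_trans hl (min_le_left _ _)
  have hln : l ≤ n := le_trans hl (min_le_right _ _)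
  unfold uext
  split_ifs with h h1 h1
  · -- x ≤ m ∧ y ≤ n, condition true
    simp only [Phi, Finset.sum_apply, Pi.smul_apply, basisW, smul_eq_mul, mul_ite, mul_one,
      mul_zero]
    rw [Finset.sum_eq_single (x - (m - l))]
    · rw [if_pos (⟨by omega, by omega⟩ : _ ∧ _)]
    · intro j hj hjne
      rw [if_neg]
      simp only [Finset.mem_range] at hj
      simp only [not_and]
      intro hx hy
      exact absurd (by omega : j = x - (m - l)) hjne
    · intro hmem
      exfalso; apply hmem
      simp only [Finset.mem_range]
      omega
  · -- x ≤ m ∧ y ≤ n, condition false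
    simp only [Phi, Finset.sum_apply, Pi.smul_apply, basisW, smul_eq_mul, mul_ite, mul_one,
      mul_zero]
    apply Finset.sum_eq_zero
    intro j hj
    rw [if_neg]
    simp only [Finset.mem_range] at hj
    simp only [not_and]
    intro hx hy
    exfalso; apply h1
    refine ⟨by omega, by omega, by omega, by omega⟩
  · exfalso; exact h ⟨h1.2.2.1, h1.2.2.2⟩
  · rfl

/-- `f Φ_l = 0` in `V_m ⊗ V_n`, for `0 ≤ l ≤ min(m,n)`. -/
theorem f_Phi_eq_zero (q : ℂ) (hq : q ≠ 0) (hq' : NotRootOfUnity q)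
    (m n l : ℕ) (hl : l ≤ min m n) :
    fT q m n (Phi q m n l) = 0 := by
  have hlm : l ≤ m := le_trans hl (min_le_left _ _)
  have hln : l ≤ n := le_trans hl (min_le_right _ _)
  funext a b
  obtain ⟨A, hA⟩ := a
  obtain ⟨B, hB⟩ := b
  show qint q (A : ℤ) * uext (Phi q m n l) (A - 1) B
      + q ^ (-((m : ℤ) - 2 * (A : ℤ))) * qint q (B : ℤ) * uext (Phi q m n l) A (B - 1)
      = 0
  rw [Phi_apply q m n l hl, Phi_apply q m n l hl]
  split_ifs with h1 h2 h2
  · -- both terms present: use the recurrence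
    by_cases hA0 : A = 0
    · have hB0 : B = 0 := by omega
      subst hA0; subst hB0
      norm_num [qint_zero]
    have hA1 : 1 ≤ A := by omega
    have hB1 : 1 ≤ B := by omega
    obtain ⟨i, hAi, hBi, hil⟩ : ∃ i : ℕ, A = m - l + i + 1 ∧ B = n - i ∧ i + 1 ≤ l :=
      ⟨A - 1 - (m - l), by omega, by omega, by omega⟩
    have hAcast : (A : ℤ) = (m : ℤ) - l + i + 1 := by omega
    have hBcast : (B : ℤ) = (n : ℤ) - i := by omega
    have hexp : -((m : ℤ) - 2 * (A : ℤ)) = (m : ℤ) - 2 * l + 2 * i + 2 := by omega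
    have hidx : A - (m - l) = i + 1 := by omega
    have hidx1 : A - 1 - (m - l) = i := by omega
    rw [hexp, hAcast, hBcast, hidx, hidx1]
    exact key_rec q hq hq' m n l i hln hil
  · -- only first: forces A = 0
    have hA0 : A = 0 := by omega
    subst hA0
    norm_num [qint_zero]
  · -- only second: forces B = 0
    have hB0 : B = 0 := by omega
    subst hB0
    norm_num [qint_zero]
  · ring
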